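/- Let X be an Archimedean vector lattice, n ∈ ℕ, and x = (x₁,…,xₙ) ∈ Xⁿ. If there exists a vector lattice homomorphism Φ : H_n → X with Φ(π_i) = x_i for all i, then Φ is unique: any two vector lattice homomorphisms H_n → X sending each π_i to x_i coincide. -/

import Mathlib

/-- `H_n`: positively homogeneous continuous functions `ℝⁿ → ℝ`. -/
def MemHn {n : ℕ} (f : (Fin n → ℝ) → ℝ) : Prop :=
  Continuous f ∧ ∀ (c : ℝ), 0 ≤ c → ∀ t, f (c • t) = c * f t

/-- the `i`-th coordinate projection, an element of `H_n`. -/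
def projFn (n : ℕ) (i : Fin n) : (Fin n → ℝ) → ℝ := fun t => t i

section VL
variable {X : Type*} [Lattice X] [AddCommGroup X] [Module ℝ X]

/-- A vector lattice homomorphism `H_n → X`, encoded as a map on all functions
that is linear and sup-preserving on members of `H_n`. -/
def IsVLHomHn {n : ℕ} (Φ : ((Fin n → ℝ) → ℝ) → X) : Prop :=
  (∀ f g, MemHn f → MemHn g → Φ (f + g) = Φ f + Φ g) ∧
  (∀ (c : ℝ) f, MemHn f → Φ (c • f) = c • Φ f) ∧
  (∀ f g, MemHn f → MemHn g → Φ (f ⊔ g) = Φ f ⊔ Φ g)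

/-- The order ideal generated by `e`. -/
def Ie (e : X) : Set X := {x | ∃ l : ℝ, 0 ≤ l ∧ |x| ≤ l • e}

/-- `‖x‖_e = inf {λ ≥ 0 : |x| ≤ λ e}`. -/
noncomputable def enorm (e x : X) : ℝ := sInf {l : ℝ | 0 ≤ l ∧ |x| ≤ l • e}

/-- A sublattice and linear subspace. -/
def IsSubl (S : Set X) : Prop :=
  (0 : X) ∈ S ∧ (∀ a ∈ S, ∀ b ∈ S, a + b ∈ S) ∧
  (∀ (c : ℝ), ∀ a ∈ S, c • a ∈ S) ∧ (∀ a ∈ S, ∀ b ∈ S, a ⊔ b ∈ S)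

/-- `S` is closed in the carrier `C` with respect to the `‖·‖_e`-distance. -/
def ClosedIn (e : X) (C S : Set X) : Prop :=
  ∀ x ∈ C, (∀ ε : ℝ, 0 < ε → ∃ y ∈ S, enorm e (x - y) < ε) → x ∈ S

/-- The closed sublattice of `C` generated by the set `A`. -/
def genClosedSubl (e : X) (C A : Set X) : Set X :=
  ⋂₀ {S : Set X | S ⊆ C ∧ A ⊆ S ∧ IsSubl S ∧ ClosedIn e C S}

/-- The norm `‖·‖_e` is complete on `S`: every `‖·‖_e`-Cauchy sequence in `S`
converges, in `‖·‖_e`, to an element of `S`. -/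
def CompleteOn (e : X) (S : Set X) : Prop :=
  ∀ u : ℕ → X, (∀ k, u k ∈ S) →
    (∀ ε : ℝ, 0 < ε → ∃ N, ∀ m ≥ N, ∀ n ≥ N, enorm e (u m - u n) < ε) →
    ∃ x ∈ S, ∀ ε : ℝ, 0 < ε → ∃ N, ∀ m ≥ N, enorm e (u m - x) < ε

end VL

/-- An Archimedean vector lattice. -/
def IsArchimedeanVL (X : Type*) [Lattice X] [AddCommGroup X] : Prop :=
  ∀ x y : X, 0 ≤ x → 0 ≤ y → (∀ n : ℕ, n • x ≤ y) → x = 0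

lemma memHn_proj (n : ℕ) (i : Fin n) : MemHn (projFn n i) :=
  ⟨continuous_apply i, fun c _ t => by simp [projFn, Pi.smul_apply, smul_eq_mul]⟩

lemma memHn_zero (n : ℕ) : MemHn (0 : (Fin n → ℝ) → ℝ) :=
  ⟨continuous_const, fun c _ t => by simp⟩

lemma memHn_add {n : ℕ} {f g : (Fin n → ℝ) → ℝ} (hf : MemHn f) (hg : MemHn g) :
    MemHn (f + g) :=
  ⟨hf.1.add hg.1, fun c hc t => by simp [hf.2 c hc t, hg.2 c hc t]; ring⟩

lemma memHn_smul {n : ℕ} (c : ℝ) {f : (Fin n → ℝ) → ℝ} (hf : MemHn f) :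
    MemHn (c • f) :=
  ⟨hf.1.const_smul c, fun a ha t => by simp [hf.2 a ha t]; ring⟩

lemma memHn_sup {n : ℕ} {f g : (Fin n → ℝ) → ℝ} (hf : MemHn f) (hg : MemHn g) :
    MemHn (f ⊔ g) := by
  refine ⟨?_, ?_⟩
  · have : (f ⊔ g) = fun t => max (f t) (g t) := by
      funext t; simp [Pi.sup_apply]
    rw [this]; exact hf.1.max hg.1
  · intro c hc t
    simp only [Pi.sup_apply, hf.2 c hc t, hg.2 c hc t]
    rcases le_total (f t) (g t) with h | h
    · rw [max_eq_right h, max_eq_right (by nlinarith)]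
    · rw [max_eq_left h, max_eq_left (by nlinarith)]

inductive GenD (n : ℕ) : ((Fin n → ℝ) → ℝ) → Prop
  | proj (i : Fin n) : GenD n (projFn n i)
  | add {f g} : GenD n f → GenD n g → GenD n (f + g)
  | smul (c : ℝ) {f} : GenD n f → GenD n (c • f)
  | sup {f g} : GenD n f → GenD n g → GenD n (f ⊔ g)

lemma genD_memHn {n : ℕ} {f : (Fin n → ℝ) → ℝ} (h : GenD n f) : MemHn f := by
  induction h with
  | proj i => exact memHn_proj n i
  | add _ _ ihf ihg => exact memHn_add ihf ihg
  | smul c _ ih => exact memHn_smul c ih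
  | sup _ _ ihf ihg => exact memHn_sup ihf ihg

lemma genD_inf {n : ℕ} {f g : (Fin n → ℝ) → ℝ} (hf : GenD n f) (hg : GenD n g) :
    GenD n (f ⊓ g) := by
  have : f ⊓ g = (-1 : ℝ) • (((-1 : ℝ) • f) ⊔ ((-1 : ℝ) • g)) := by
    funext t
    have : f t ⊓ g t = -(-(f t) ⊔ -(g t)) := by
      simp [neg_sup]
    simpa [Pi.inf_apply, Pi.sup_apply] using this
  rw [this]
  exact GenD.smul _ (GenD.sup (GenD.smul _ hf) (GenD.smul _ hg))

lemma genD_sup' {n : ℕ} {ι : Type*} (s : Finset ι) (hs : s.Nonempty)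
    (F : ι → (Fin n → ℝ) → ℝ) (h : ∀ i ∈ s, GenD n (F i)) :
    GenD n (s.sup' hs F) := by
  induction hs using Finset.Nonempty.cons_induction with
  | singleton a => simpa using h a (by simp)
  | cons a s ha hne ih =>
      rw [Finset.sup'_cons hne]
      exact GenD.sup (h a (by simp)) (ih (fun i hi => h i (by simp [hi])))

/-- the sup-norm function as a lattice expression -/
noncomputable def NFn (n : ℕ) : (Fin n → ℝ) → ℝ := fun t => ‖t‖

lemma NFn_eq_sup' {n : ℕ} (hn : 0 < n) (t : Fin n → ℝ) :
    NFn n t = Finset.univ.sup' (by simpa [Finset.univ_nonempty_iff, ← Fin.pos_iff_nonempty]) (fun i => |t i|) := by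
  have hne : (Finset.univ : Finset (Fin n)).Nonempty := by
    simpa [Finset.univ_nonempty_iff, ← Fin.pos_iff_nonempty]
  apply le_antisymm
  · rw [NFn]
    apply (pi_norm_le_iff_of_nonneg ?_).2
    · intro i
      rw [Real.norm_eq_abs]; exact Finset.le_sup' (fun i => |t i|) (Finset.mem_univ i)
    · exact le_trans (abs_nonneg (t hne.choose))
        (Finset.le_sup' (fun i => |t i|) (Finset.mem_univ hne.choose))
  · apply Finset.sup'_le
    intro i _
    have := norm_le_pi_norm t i; rw [Real.norm_eq_abs] at this; exact this

lemma genD_NFn {n : ℕ} (hn : 0 < n) : GenD n (NFn n) := by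
  have hne : (Finset.univ : Finset (Fin n)).Nonempty := by
    simpa [Finset.univ_nonempty_iff, ← Fin.pos_iff_nonempty]
  have habs : ∀ i : Fin n, GenD n (fun t => |t i|) := by
    intro i
    have : (fun t : Fin n → ℝ => |t i|) = projFn n i ⊔ ((-1 : ℝ) • projFn n i) := by
      funext t
      simp [Pi.sup_apply, projFn, abs, Pi.smul_apply]
    rw [this]
    exact GenD.sup (GenD.proj i) (GenD.smul _ (GenD.proj i))
  have : NFn n = Finset.univ.sup' hne (fun i => fun t => |t i|) := by
    funext t
    rw [NFn_eq_sup' hn t, Finset.sup'_apply]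
  rw [this]
  exact genD_sup' _ hne _ (fun i _ => habs i)

lemma NFn_homog {n : ℕ} (c : ℝ) (hc : 0 ≤ c) (t : Fin n → ℝ) :
    NFn n (c • t) = c * NFn n t := by
  simp [NFn, norm_smul, Real.norm_eq_abs, abs_of_nonneg hc]

open ContinuousMap in
lemma dense_approx {n : ℕ} (hn : 0 < n) {f : (Fin n → ℝ) → ℝ} (hf : MemHn f)
    {ε : ℝ} (hε : 0 < ε) :
    ∃ g, GenD n g ∧ ∀ w, |f w - g w| ≤ ε * NFn n w := by
  set S := Metric.sphere (0 : Fin n → ℝ) 1 with hS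
  haveI : CompactSpace S := isCompact_iff_compactSpace.1 (isCompact_sphere 0 1)
  have hNs : ∀ s : S, NFn n s = 1 := fun s => by
    simpa [NFn] using mem_sphere_zero_iff_norm.1 s.2
  -- restriction map
  let R : ∀ (g : (Fin n → ℝ) → ℝ), MemHn g → C(S, ℝ) := fun g hg =>
    ⟨fun s => g s, hg.1.comp continuous_subtype_val⟩
  let L : Set C(S, ℝ) := {u | ∃ g, ∃ hg : GenD n g, u = R g (genD_memHn hg)}
  have hLsup : ∀ u ∈ L, ∀ v ∈ L, u ⊔ v ∈ L := by
    rintro u ⟨g, hg, rfl⟩ v ⟨g', hg', rfl⟩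
    refine ⟨g ⊔ g', GenD.sup hg hg', ?_⟩
    ext s; simp [R, Pi.sup_apply]
  have hLinf : ∀ u ∈ L, ∀ v ∈ L, u ⊓ v ∈ L := by
    rintro u ⟨g, hg, rfl⟩ v ⟨g', hg', rfl⟩
    refine ⟨g ⊓ g', genD_inf hg hg', ?_⟩
    ext s; simp [R, Pi.inf_apply]
  have hLne : L.Nonempty := ⟨_, NFn n, genD_NFn hn, rfl⟩
  have hsep : L.SeparatesPointsStrongly := by
    intro v p q
    by_cases hpq : (p : Fin n → ℝ) = (q : Fin n → ℝ)
    · have hpq' : p = q := Subtype.ext hpq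
      subst hpq'
      refine ⟨R ((v p) • NFn n) (genD_memHn (GenD.smul _ (genD_NFn hn))),
        ⟨_, GenD.smul _ (genD_NFn hn), rfl⟩, ?_, ?_⟩ <;>
        simp [R, Pi.smul_apply, hNs p]
    · obtain ⟨i, hi⟩ := Function.ne_iff.1 hpq
      set α : ℝ := (v p - v q) / ((p : Fin n → ℝ) i - (q : Fin n → ℝ) i) with hα
      set β : ℝ := v p - α * (p : Fin n → ℝ) i with hβ
      have hgen : GenD n (α • projFn n i + β • NFn n) :=
        GenD.add (GenD.smul _ (GenD.proj i)) (GenD.smul _ (genD_NFn hn))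
      refine ⟨R _ (genD_memHn hgen), ⟨_, hgen, rfl⟩, ?_, ?_⟩
      · simp only [R, ContinuousMap.coe_mk, Pi.add_apply, Pi.smul_apply,
          smul_eq_mul, projFn, hNs p, hβ]
        ring
      · simp only [R, ContinuousMap.coe_mk, Pi.add_apply, Pi.smul_apply,
          smul_eq_mul, projFn, hNs q, hβ, hα]
        have hne : (p : Fin n → ℝ) i - (q : Fin n → ℝ) i ≠ 0 := sub_ne_zero.2 hi
        field_simp
        ring
  have hclo := ContinuousMap.sublattice_closure_eq_top L hLne hLinf hLsup hsep
  have hfc : (R f hf) ∈ closure L := by rw [hclo]; trivial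
  obtain ⟨u, huL, hud⟩ := Metric.mem_closure_iff.1 hfc ε hε
  obtain ⟨g, hg, rfl⟩ := huL
  refine ⟨g, hg, ?_⟩
  have hsphere : ∀ s : S, |f s - g s| ≤ ε := by
    intro s
    have h1 : dist (R f hf s) (R g (genD_memHn hg) s) ≤ dist (R f hf) (R g (genD_memHn hg)) :=
      ContinuousMap.dist_apply_le_dist s
    have := le_of_lt (lt_of_le_of_lt h1 hud)
    simpa [R, Real.dist_eq] using this
  intro w
  by_cases hw : w = 0
  · subst hw
    have hf0 : f 0 = 0 := by
      have := hf.2 0 le_rfl 0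
      simpa using this
    have hg0 : g 0 = 0 := by
      have := (genD_memHn hg).2 0 le_rfl 0
      simpa using this
    simp [hf0, hg0, NFn]
  · have hr : 0 < ‖w‖ := norm_pos_iff.2 hw
    set s : Fin n → ℝ := ‖w‖⁻¹ • w with hs'
    have hsS : s ∈ S := by
      rw [hS, mem_sphere_zero_iff_norm, hs', norm_smul]
      simp [abs_of_nonneg (inv_nonneg.2 hr.le), inv_mul_cancel₀ hr.ne']
    have hws : w = ‖w‖ • s := by
      rw [hs', smul_smul, mul_inv_cancel₀ hr.ne', one_smul]
    have hfw : f w = ‖w‖ * f s := by conv_lhs => rw [hws]; rw [hf.2 _ hr.le s]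
    have hgw : g w = ‖w‖ * g s := by conv_lhs => rw [hws]; rw [(genD_memHn hg).2 _ hr.le s]
    have := hsphere ⟨s, hsS⟩
    calc |f w - g w| = ‖w‖ * |f s - g s| := by
          rw [hfw, hgw, ← mul_sub, abs_mul, abs_of_nonneg hr.le]
      _ ≤ ‖w‖ * ε := mul_le_mul_of_nonneg_left this hr.le
      _ = ε * NFn n w := by rw [NFn]; ring

section Hom
variable {X : Type*} [Lattice X] [AddCommGroup X] [Module ℝ X]
  [CovariantClass X X (· + ·) (· ≤ ·)]
  {n : ℕ} {Φ : ((Fin n → ℝ) → ℝ) → X} (hΦ : IsVLHomHn Φ)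

include hΦ

lemma hom_zero : Φ 0 = 0 := by
  have h := hΦ.2.1 0 0 (memHn_zero n)
  simpa using h

lemma hom_nonneg {h : (Fin n → ℝ) → ℝ} (hh : MemHn h) (hpos : ∀ w, 0 ≤ h w) :
    0 ≤ Φ h := by
  have h1 : h ⊔ 0 = h := sup_eq_left.2 (fun w => hpos w)
  have h2 : Φ (h ⊔ 0) = Φ h ⊔ Φ 0 := hΦ.2.2 h 0 hh (memHn_zero n)
  rw [h1, hom_zero hΦ] at h2
  calc (0 : X) ≤ Φ h ⊔ 0 := le_sup_right
    _ = Φ h := h2.symm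

lemma hom_sub {f g : (Fin n → ℝ) → ℝ} (hf : MemHn f) (hg : MemHn g) :
    Φ (f - g) = Φ f - Φ g := by
  have hfg : f - g = f + (-1 : ℝ) • g := by funext w; simp; ring
  rw [hfg, hΦ.1 f _ hf (memHn_smul _ hg), hΦ.2.1 (-1) g hg]
  simp [sub_eq_add_neg]

lemma hom_bound {h : (Fin n → ℝ) → ℝ} (hh : MemHn h) {c : ℝ}
    (hb : ∀ w, |h w| ≤ c * NFn n w) (hn : 0 < n) :
    |Φ h| ≤ c • Φ (NFn n) := by
  have hN : MemHn (NFn n) := genD_memHn (genD_NFn hn)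
  have key : ∀ p : (Fin n → ℝ) → ℝ, MemHn p → (∀ w, p w ≤ c * NFn n w) →
      Φ p ≤ c • Φ (NFn n) := by
    intro p hp hple
    have hpos : ∀ w, 0 ≤ (c • NFn n - p) w := fun w => by
      simpa [Pi.sub_apply, Pi.smul_apply, smul_eq_mul, sub_nonneg] using hple w
    have h1 : 0 ≤ Φ (c • NFn n - p) :=
      hom_nonneg hΦ (by
        have : c • NFn n - p = c • NFn n + (-1 : ℝ) • p := by funext w; simp; ring
        rw [this]; exact memHn_add (memHn_smul _ hN) (memHn_smul _ hp)) hpos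
    rw [hom_sub hΦ (memHn_smul _ hN) hp, hΦ.2.1 c _ hN] at h1
    exact sub_nonneg.1 h1
  have h1 : Φ h ≤ c • Φ (NFn n) :=
    key h hh (fun w => le_trans (le_abs_self _) (hb w))
  have h2 : Φ (-h) ≤ c • Φ (NFn n) := by
    refine key (-h) ?_ (fun w => ?_)
    · have : -h = (-1 : ℝ) • h := by funext w; simp
      rw [this]; exact memHn_smul _ hh
    · simpa [Pi.neg_apply] using le_trans (neg_le_abs _) (hb w)
  have hneg : Φ (-h) = -Φ h := by
    have : (-h : (Fin n → ℝ) → ℝ) = (0 : (Fin n → ℝ) → ℝ) - h := by funext w; simp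
    rw [this, hom_sub hΦ (memHn_zero n) hh, hom_zero hΦ, zero_sub]
  rw [hneg] at h2
  exact abs_le'.2 ⟨h1, h2⟩
end Hom

section Main
variable {X : Type*} [Lattice X] [AddCommGroup X] [Module ℝ X]
  [CovariantClass X X (· + ·) (· ≤ ·)] {n : ℕ}

lemma nsmul_mono {a b : X} (h : a ≤ b) (k : ℕ) : k • a ≤ k • b := by
  induction k with
  | zero => simp
  | succ k ih => rw [succ_nsmul, succ_nsmul]; exact add_le_add ih h

lemma genD_eq {Φ Ψ : ((Fin n → ℝ) → ℝ) → X}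
    (hΦ : IsVLHomHn Φ) (hΨ : IsVLHomHn Ψ)
    (hproj : ∀ i, Φ (projFn n i) = Ψ (projFn n i))
    {f : (Fin n → ℝ) → ℝ} (hf : GenD n f) : Φ f = Ψ f := by
  induction hf with
  | proj i => exact hproj i
  | add hg hh ihg ihh =>
      rw [hΦ.1 _ _ (genD_memHn hg) (genD_memHn hh),
        hΨ.1 _ _ (genD_memHn hg) (genD_memHn hh), ihg, ihh]
  | smul c hg ih => rw [hΦ.2.1 c _ (genD_memHn hg), hΨ.2.1 c _ (genD_memHn hg), ih]
  | sup hg hh ihg ihh =>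
      rw [hΦ.2.2 _ _ (genD_memHn hg) (genD_memHn hh),
        hΨ.2.2 _ _ (genD_memHn hg) (genD_memHn hh), ihg, ihh]

end Main

/-- uniqueness of the vector lattice homomorphism `H_n → X`
sending each coordinate projection `π_i` to `x_i`. -/
theorem stmt7 {X : Type*} [Lattice X] [AddCommGroup X] [Module ℝ X]
    [CovariantClass X X (· + ·) (· ≤ ·)]
    (hArch : IsArchimedeanVL X)
    (n : ℕ) (x : Fin n → X)
    (Φ Ψ : ((Fin n → ℝ) → ℝ) → X) (hΦ : IsVLHomHn Φ) (hΨ : IsVLHomHn Ψ)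
    (hΦproj : ∀ i, Φ (projFn n i) = x i) (hΨproj : ∀ i, Ψ (projFn n i) = x i) :
    ∀ f : (Fin n → ℝ) → ℝ, MemHn f → Φ f = Ψ f := by
  intro f hf
  rcases Nat.eq_zero_or_pos n with hn0 | hn
  · subst hn0
    have hf0 : f = 0 := by
      funext t
      have ht : t = 0 := Subsingleton.elim t 0
      rw [ht]
      simpa using hf.2 0 le_rfl 0
    rw [hf0, hom_zero hΦ, hom_zero hΨ]
  · set e : X := Φ (NFn n) with he
    have hproj : ∀ i, Φ (projFn n i) = Ψ (projFn n i) := fun i => by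
      rw [hΦproj i, hΨproj i]
    have hN : MemHn (NFn n) := genD_memHn (genD_NFn hn)
    have he' : Ψ (NFn n) = e := (genD_eq hΦ hΨ hproj (genD_NFn hn)).symm
    have he0 : 0 ≤ e := hom_nonneg hΦ hN (fun w => norm_nonneg w)
    set y : X := |Φ f - Ψ f| with hy
    have hkey : ∀ k : ℕ, (k + 1) • y ≤ (2 : ℝ) • e := by
      intro k
      have hε : (0 : ℝ) < 1 / (k + 1) := by positivity
      obtain ⟨g, hg, hgb⟩ := dense_approx hn hf hε
      have hgH : MemHn g := genD_memHn hg
      have hfg : MemHn (f - g) := by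
        have : f - g = f + (-1 : ℝ) • g := by funext w; simp; ring
        rw [this]; exact memHn_add hf (memHn_smul _ hgH)
      have hbb : ∀ w, |(f - g) w| ≤ (1 / (k + 1)) * NFn n w := fun w => by
        simpa [Pi.sub_apply] using hgb w
      have hΦb : |Φ (f - g)| ≤ (1 / (k + 1) : ℝ) • e := hom_bound hΦ hfg hbb hn
      have hΨb : |Ψ (f - g)| ≤ (1 / (k + 1) : ℝ) • e := by
        have := hom_bound hΨ hfg hbb hn
        rwa [he'] at this
      have hgeq : Φ g = Ψ g := genD_eq hΦ hΨ hproj hg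
      have hsub : Φ f - Ψ f = Φ (f - g) - Ψ (f - g) := by
        rw [hom_sub hΦ hf hgH, hom_sub hΨ hf hgH, hgeq]
        abel
      have hyle : y ≤ (2 / (k + 1) : ℝ) • e := by
        have h1 : y ≤ |Φ (f - g)| + |Ψ (f - g)| := by
          rw [hy, hsub, sub_eq_add_neg]
          exact le_trans (abs_add_le _ _) (by rw [abs_neg])
        calc y ≤ |Φ (f - g)| + |Ψ (f - g)| := h1
          _ ≤ (1 / (k + 1) : ℝ) • e + (1 / (k + 1) : ℝ) • e := add_le_add hΦb hΨb
          _ = (2 / (k + 1) : ℝ) • e := by rw [← add_smul]; ring_nf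
      calc (k + 1) • y ≤ (k + 1) • ((2 / (k + 1) : ℝ) • e) := nsmul_mono hyle _
        _ = (((k : ℝ) + 1) * (2 / (k + 1))) • e := by
            rw [← Nat.cast_smul_eq_nsmul ℝ, smul_smul]; norm_num
        _ = (2 : ℝ) • e := by
            congr 1
            field_simp
    have hall : ∀ m : ℕ, m • y ≤ (2 : ℝ) • e := by
      intro m
      calc m • y ≤ (m + 1) • y := by
            rw [succ_nsmul]; exact le_add_of_nonneg_right (abs_nonneg _)
        _ ≤ (2 : ℝ) • e := hkey m
    have h2e : 0 ≤ (2 : ℝ) • e := by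
      rw [two_smul]; exact add_nonneg he0 he0
    have hy0 : y = 0 := hArch y ((2 : ℝ) • e) (abs_nonneg _) h2e hall
    have h1 : Φ f - Ψ f ≤ 0 := hy0 ▸ le_abs_self _
    have h2 : -(Φ f - Ψ f) ≤ 0 := hy0 ▸ neg_le_abs _
    have : Φ f - Ψ f = 0 := le_antisymm h1 (neg_nonpos.1 h2)
    exact sub_eq_zero.1 this
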